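/- arXiv:1504.05304 — 2 statements merged into one kernel-verified Lean document; each statement's English description precedes it below -/
import Mathlib

section
/- For a smooth positive function n on ℝ³, the quantum Bohm potential identity holds: -n ∇(-(ħ²/2m)·(Δ√n)/√n) = (ħ²/4m) div(n ∇² log n), where ∇² log n denotes the Hessian of log n. -/
open MeasureTheory

/-- Partial derivative in direction `i`. -/
noncomputable def pd (i : Fin 3) (f : (Fin 3 → ℝ) → ℝ) : (Fin 3 → ℝ) → ℝ :=
  fun x => fderiv ℝ f x (Pi.single i 1)

/-- Laplacian. -/
noncomputable def lap (f : (Fin 3 → ℝ) → ℝ) : (Fin 3 → ℝ) → ℝ :=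
  fun x => ∑ i : Fin 3, pd i (pd i f) x

section Lemmas

variable {f g : (Fin 3 → ℝ) → ℝ} {x : Fin 3 → ℝ} {i j : Fin 3}

lemma contDiff_pd (hf : ContDiff ℝ (⊤ : ℕ∞) f) (i : Fin 3) : ContDiff ℝ (⊤ : ℕ∞) (pd i f) := by
  have h1 : ContDiff ℝ (⊤ : ℕ∞) (fderiv ℝ f) := hf.fderiv_right (by simp)
  exact (ContinuousLinearMap.apply ℝ ℝ (Pi.single i 1)).contDiff.comp h1

lemma diffAt (hf : ContDiff ℝ (⊤ : ℕ∞) f) (x : Fin 3 → ℝ) : DifferentiableAt ℝ f x :=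
  (hf.differentiable (by simp)).differentiableAt

lemma pd_mul (hf : DifferentiableAt ℝ f x) (hg : DifferentiableAt ℝ g x) :
    pd i (fun y => f y * g y) x = pd i f x * g x + f x * pd i g x := by
  simp only [pd, fderiv_fun_mul hf hg, ContinuousLinearMap.add_apply,
    ContinuousLinearMap.smul_apply, smul_eq_mul]
  ring

lemma pd_sub (hf : DifferentiableAt ℝ f x) (hg : DifferentiableAt ℝ g x) :
    pd i (fun y => f y - g y) x = pd i f x - pd i g x := by
  simp only [pd, fderiv_fun_sub hf hg, ContinuousLinearMap.sub_apply]

lemma pd_inv (hg : DifferentiableAt ℝ g x) (hgx : g x ≠ 0) :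
    pd i (fun y => (g y)⁻¹) x = -(pd i g x) / (g x)^2 := by
  have h := ((hasDerivAt_inv hgx).comp_hasFDerivAt x hg.hasFDerivAt)
  have hfd : fderiv ℝ (fun y => (g y)⁻¹) x = (-((g x)^2)⁻¹) • fderiv ℝ g x := h.fderiv
  simp only [pd, hfd, ContinuousLinearMap.smul_apply, smul_eq_mul]
  ring

lemma pd_div (hf : DifferentiableAt ℝ f x) (hg : DifferentiableAt ℝ g x) (hgx : g x ≠ 0) :
    pd i (fun y => f y / g y) x = (pd i f x * g x - f x * pd i g x) / (g x)^2 := by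
  have hginv : DifferentiableAt ℝ (fun y => (g y)⁻¹) x := hg.inv hgx
  have : pd i (fun y => f y / g y) x = pd i f x * (g x)⁻¹ + f x * pd i (fun y => (g y)⁻¹) x := by
    simpa only [div_eq_mul_inv] using pd_mul (i := i) hf hginv
  rw [this, pd_inv hg hgx]
  field_simp
  ring

lemma diffAt_div (hf : DifferentiableAt ℝ f x) (hg : DifferentiableAt ℝ g x)
    (hgx : g x ≠ 0) : DifferentiableAt ℝ (fun y => f y / g y) x := by
  simp only [div_eq_mul_inv]
  exact hf.mul (hg.inv hgx)

lemma pd_const_mul (c : ℝ) (hf : DifferentiableAt ℝ f x) :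
    pd i (fun y => c * f y) x = c * pd i f x := by
  simp only [pd, fderiv_const_mul hf, ContinuousLinearMap.smul_apply, smul_eq_mul]

lemma pd_sum {F : Fin 3 → (Fin 3 → ℝ) → ℝ} (hF : ∀ k, DifferentiableAt ℝ (F k) x) :
    pd i (fun y => ∑ k : Fin 3, F k y) x = ∑ k : Fin 3, pd i (F k) x := by
  simp only [pd]
  rw [fderiv_fun_sum (fun k _ => hF k)]
  simp [ContinuousLinearMap.sum_apply]

lemma pd_sqrt {n : (Fin 3 → ℝ) → ℝ} (hd : DifferentiableAt ℝ n x) (hx : 0 < n x) :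
    pd i (fun y => Real.sqrt (n y)) x = pd i n x / (2 * Real.sqrt (n x)) := by
  have h := ((Real.hasDerivAt_sqrt hx.ne').comp_hasFDerivAt x hd.hasFDerivAt)
  have hfd : fderiv ℝ (fun y => Real.sqrt (n y)) x
      = (1 / (2 * Real.sqrt (n x))) • fderiv ℝ n x := h.fderiv
  simp only [pd, hfd, ContinuousLinearMap.smul_apply, smul_eq_mul]
  ring

lemma pd_log {n : (Fin 3 → ℝ) → ℝ} (hd : DifferentiableAt ℝ n x) (hx : 0 < n x) :
    pd i (fun y => Real.log (n y)) x = pd i n x / n x := by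
  have h := ((Real.hasDerivAt_log hx.ne').comp_hasFDerivAt x hd.hasFDerivAt)
  have hfd : fderiv ℝ (fun y => Real.log (n y)) x = (n x)⁻¹ • fderiv ℝ n x := h.fderiv
  simp only [pd, hfd, ContinuousLinearMap.smul_apply, smul_eq_mul]
  ring

lemma pd_comm (hf : ContDiff ℝ (⊤ : ℕ∞) f) : pd i (pd j f) x = pd j (pd i f) x := by
  have hsym := (hf.contDiffAt (x := x)).isSymmSndFDerivAt (by simp [minSmoothness_of_isRCLikeNormedField]; exact WithTop.coe_le_coe.mpr le_top)
  have hder : DifferentiableAt ℝ (fderiv ℝ f) x :=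
    ((hf.fderiv_right (m := (⊤ : ℕ∞)) (by simp)).differentiable (by simp)).differentiableAt
  have h2 : ∀ (k l : Fin 3), pd k (pd l f) x =
      fderiv ℝ (fderiv ℝ f) x (Pi.single k 1) (Pi.single l 1) := by
    intro k l
    set L : ((Fin 3 → ℝ) →L[ℝ] ℝ) →L[ℝ] ℝ :=
      ContinuousLinearMap.apply ℝ ℝ (Pi.single l 1) with hL
    have hcomp : pd l f = fun y => L (fderiv ℝ f y) := rfl
    have hfd : fderiv ℝ (fun y => L (fderiv ℝ f y)) x
        = L.comp (fderiv ℝ (fderiv ℝ f) x) := (L.hasFDerivAt.comp x hder.hasFDerivAt).fderiv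
    rw [hcomp]
    show fderiv ℝ (fun y => L (fderiv ℝ f y)) x (Pi.single k 1) = _
    rw [hfd]; rfl
  rw [h2, h2, hsym]

end Lemmas

section Main

variable {n : (Fin 3 → ℝ) → ℝ}

/-- smoothness of the square root of a positive smooth function -/
lemma contDiff_sqrtn (hn : ContDiff ℝ (⊤ : ℕ∞) n) (hpos : ∀ x, 0 < n x) :
    ContDiff ℝ (⊤ : ℕ∞) (fun y => Real.sqrt (n y)) := by
  rw [contDiff_iff_contDiffAt]
  intro y
  exact (Real.contDiffAt_sqrt (hpos y).ne').comp y hn.contDiffAt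

/-- first derivative of sqrt of n, as functions -/
lemma pd_sqrtn (hn : ContDiff ℝ (⊤ : ℕ∞) n) (hpos : ∀ x, 0 < n x) (i : Fin 3) :
    pd i (fun z => Real.sqrt (n z)) = fun y => pd i n y / (2 * Real.sqrt (n y)) :=
  funext fun y => pd_sqrt (diffAt hn y) (hpos y)

/-- second derivative of sqrt of n, pointwise -/
lemma pd2_sqrtn (hn : ContDiff ℝ (⊤ : ℕ∞) n) (hpos : ∀ x, 0 < n x) (i : Fin 3) (y : Fin 3 → ℝ) :
    pd i (pd i (fun z => Real.sqrt (n z))) y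
      = pd i (pd i n) y / (2 * Real.sqrt (n y))
        - pd i n y * pd i n y / (4 * (n y * Real.sqrt (n y))) := by
  have hspos : 0 < Real.sqrt (n y) := Real.sqrt_pos.mpr (hpos y)
  have hscd : ContDiff ℝ (⊤ : ℕ∞) (fun z => Real.sqrt (n z)) := contDiff_sqrtn hn hpos
  rw [pd_sqrtn hn hpos i]
  rw [pd_div (diffAt (contDiff_pd hn i) y)
      ((diffAt hscd y).const_mul 2) (by positivity)]
  rw [pd_const_mul 2 (diffAt hscd y), pd_sqrt (diffAt hn y) (hpos y)]
  have hs : Real.sqrt (n y) * Real.sqrt (n y) = n y := Real.mul_self_sqrt (hpos y).le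
  rw [← hs]
  field_simp
  rw [Real.sqrt_sq hspos.le]
  ring

/-- the Bohm potential rewritten as a function -/
lemma bohm_fun (hn : ContDiff ℝ (⊤ : ℕ∞) n) (hpos : ∀ x, 0 < n x) (c : ℝ) :
    (fun y => -c * lap (fun z => Real.sqrt (n z)) y / Real.sqrt (n y))
      = fun y => -c * ∑ i : Fin 3,
          (pd i (pd i n) y / (2 * n y) - pd i n y * pd i n y / (4 * (n y * n y))) := by
  funext y
  have hspos : 0 < Real.sqrt (n y) := Real.sqrt_pos.mpr (hpos y)
  have hs : Real.sqrt (n y) * Real.sqrt (n y) = n y := Real.mul_self_sqrt (hpos y).le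
  rw [mul_div_assoc]
  congr 1
  simp only [lap]
  rw [Finset.sum_div]
  refine Finset.sum_congr rfl fun i _ => ?_
  rw [pd2_sqrtn hn hpos i y, ← hs]
  field_simp
  rw [Real.sqrt_sq hspos.le]

/-- the divergence integrand rewritten as a function -/
lemma div_fun (hn : ContDiff ℝ (⊤ : ℕ∞) n) (hpos : ∀ x, 0 < n x) (i j : Fin 3) :
    (fun y => n y * pd i (pd j (fun z => Real.log (n z))) y)
      = fun y => pd i (pd j n) y - pd j n y * pd i n y / n y := by
  funext y
  have hlog : pd j (fun z => Real.log (n z)) = fun y => pd j n y / n y :=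
    funext fun y => pd_log (diffAt hn y) (hpos y)
  rw [hlog]
  rw [pd_div (diffAt (contDiff_pd hn j) y) (diffAt hn y) (hpos y).ne']
  field_simp [(hpos y).ne']

lemma alg_main (N Aj Ai B1 B2 C h m : ℝ) (hN : N ≠ 0) (hm : m ≠ 0) :
    -N * (-(h^2 / (2*m)) * (C / (2*N) - B1*Aj/(2*(N*N)) - B2*Ai/(2*(N*N)) + Ai*Ai*Aj/(2*(N*N*N))))
      = h^2/(4*m) * (C - (B2*Ai + Aj*B1)/N + Aj*Ai*Ai/(N*N)) := by
  field_simp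
  ring

end Main

/-- The quantum Bohm potential identity:
`-n ∇Q(n) = (ħ²/4m) div(n ∇² log n)` where `Q(n) = -(ħ²/2m) (Δ√n)/√n`. -/
theorem bohm_potential_identity
    (n : (Fin 3 → ℝ) → ℝ) (hn : ContDiff ℝ (⊤ : ℕ∞) n) (hpos : ∀ x, 0 < n x)
    (hbar m : ℝ) (hhbar : 0 < hbar) (hm : 0 < m) (x : Fin 3 → ℝ) (j : Fin 3) :
    -(n x) * pd j (fun y =>
        -(hbar^2 / (2*m)) * lap (fun z => Real.sqrt (n z)) y / Real.sqrt (n y)) x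
      = (hbar^2 / (4*m)) *
          ∑ i : Fin 3, pd i (fun y =>
            n y * pd i (pd j (fun z => Real.log (n z))) y) x := by
  -- differentiability helpers
  have hdn : ∀ y, DifferentiableAt ℝ n y := fun y => diffAt hn y
  have hd1 : ∀ (k : Fin 3) y, DifferentiableAt ℝ (pd k n) y :=
    fun k y => diffAt (contDiff_pd hn k) y
  have hd2 : ∀ (k l : Fin 3) y, DifferentiableAt ℝ (pd k (pd l n)) y :=
    fun k l y => diffAt (contDiff_pd (contDiff_pd hn l) k) y
  have hne : ∀ y, n y ≠ 0 := fun y => (hpos y).ne'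
  -- rewrite LHS
  rw [bohm_fun hn hpos (hbar^2 / (2*m))]
  have hGdiff : ∀ (k : Fin 3) (y : Fin 3 → ℝ), DifferentiableAt ℝ
      (fun y => pd k (pd k n) y / (2 * n y) - pd k n y * pd k n y / (4 * (n y * n y))) y := by
    intro k y
    have hy := hpos y
    exact (diffAt_div (hd2 k k y) ((hdn y).const_mul 2) (by positivity)).sub
      (diffAt_div ((hd1 k y).mul (hd1 k y)) (((hdn y).mul (hdn y)).const_mul 4) (by positivity))
  have hGsum : DifferentiableAt ℝ (fun y => ∑ i : Fin 3,
      (pd i (pd i n) y / (2 * n y) - pd i n y * pd i n y / (4 * (n y * n y)))) x :=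
    DifferentiableAt.fun_sum (fun k _ => hGdiff k x)
  rw [pd_const_mul _ hGsum]
  rw [pd_sum (fun k => hGdiff k x)]
  -- rewrite RHS summands
  have hRHS : ∀ i : Fin 3, pd i (fun y =>
      n y * pd i (pd j (fun z => Real.log (n z))) y) x
      = pd i (pd i (pd j n)) x
        - (pd i (pd j n) x * pd i n x + pd j n x * pd i (pd i n) x) / n x
        + pd j n x * pd i n x * pd i n x / (n x * n x) := by
    intro i
    rw [div_fun hn hpos i j]
    have hq0 : DifferentiableAt ℝ (fun y => pd j n y * pd i n y) x :=
      (hd1 j x).mul (hd1 i x)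
    have hq1 : DifferentiableAt ℝ (fun y => pd j n y * pd i n y / n y) x :=
      diffAt_div hq0 (hdn x) (hne x)
    rw [pd_sub (hd2 i j x) hq1]
    rw [pd_div hq0 (hdn x) (hne x)]
    rw [pd_mul (hd1 j x) (hd1 i x)]
    field_simp [hne x]
    ring
  rw [Finset.sum_congr rfl (fun i _ => hRHS i)]
  -- expand LHS summands
  have hLHS : ∀ i : Fin 3, pd j (fun y =>
      pd i (pd i n) y / (2 * n y) - pd i n y * pd i n y / (4 * (n y * n y))) x
      = pd i (pd i (pd j n)) x / (2 * n x)
        - pd i (pd i n) x * pd j n x / (2 * (n x * n x))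
        - pd i (pd j n) x * pd i n x / (2 * (n x * n x))
        + pd i n x * pd i n x * pd j n x / (2 * (n x * n x * n x)) := by
    intro i
    have hposx := hpos x
    have hden1 : DifferentiableAt ℝ (fun y => 2 * n y) x := (hdn x).const_mul 2
    have hden1ne : (2 : ℝ) * n x ≠ 0 := by positivity
    have hnum2 : DifferentiableAt ℝ (fun y => pd i n y * pd i n y) x :=
      (hd1 i x).mul (hd1 i x)
    have hnn : DifferentiableAt ℝ (fun y => n y * n y) x := (hdn x).mul (hdn x)
    have hden2 : DifferentiableAt ℝ (fun y => 4 * (n y * n y)) x := hnn.const_mul 4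
    have hden2ne : (4 : ℝ) * (n x * n x) ≠ 0 := by positivity
    have ht1 : DifferentiableAt ℝ (fun y => pd i (pd i n) y / (2 * n y)) x :=
      diffAt_div (hd2 i i x) hden1 hden1ne
    have ht2 : DifferentiableAt ℝ (fun y => pd i n y * pd i n y / (4 * (n y * n y))) x :=
      diffAt_div hnum2 hden2 hden2ne
    rw [pd_sub ht1 ht2]
    rw [pd_div (hd2 i i x) hden1 hden1ne]
    rw [pd_div hnum2 hden2 hden2ne]
    rw [pd_const_mul 2 (hdn x)]
    rw [pd_const_mul 4 hnn]
    rw [pd_mul (hd1 i x) (hd1 i x)]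
    rw [pd_mul (hdn x) (hdn x)]
    -- third derivative commutation
    have hc3 : pd j (pd i (pd i n)) x = pd i (pd i (pd j n)) x := by
      rw [pd_comm (contDiff_pd hn i)]
      have : pd j (pd i n) = pd i (pd j n) :=
        funext fun y => pd_comm (x := y) hn
      rw [this]
    -- second derivative commutation
    have hc2 : pd j (pd i n) x = pd i (pd j n) x := pd_comm (x := x) hn
    rw [hc3, hc2]
    field_simp [hne x]
    ring
  rw [Finset.sum_congr rfl (fun i _ => hLHS i)]
  rw [Finset.mul_sum, Finset.mul_sum, Finset.mul_sum]
  refine Finset.sum_congr rfl fun i _ => ?_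
  exact alg_main (n x) (pd j n x) (pd i n x) (pd i (pd i n) x) (pd i (pd j n) x)
    (pd i (pd i (pd j n)) x) hbar m (hne x) hm.ne'
end

section
/- There exist constants 0 < ρ₂ ≤ 1/2 and 0 < C₁ ≤ C₂ < ∞ such that for all real ρ with |ρ| ≤ ρ₂, all u ∈ ℝ³, and all s with |s| ≤ 1/2, the energy E⁰(ρ,u,s) = (3R(1+s)/2)((1+ρ)^{5/3} - 1 - 5ρ/3) + ((1+ρ)/2)|u|² + Rsρ + (3R(1+ρ)/4)s² satisfies ρ² + |u|² + s² ≤ C₁ E⁰(ρ,u,s) ≤ C₂(ρ² + |u|² + s²). -/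
lemma f_bounds (ρ : ℝ) (h : |ρ| ≤ 1/10) :
    ρ^2/2 ≤ (1+ρ) ^ ((5:ℝ)/3) - 1 - (5/3)*ρ ∧
    (1+ρ) ^ ((5:ℝ)/3) - 1 - (5/3)*ρ ≤ ρ^2 := by
  obtain ⟨h1, h2⟩ := abs_le.mp h
  have hpos : (0:ℝ) < 1 + ρ := by linarith
  set y := (1+ρ) ^ ((1:ℝ)/3) with hy
  have hy0 : 0 < y := Real.rpow_pos_of_pos hpos _
  have hy3 : y^3 = 1 + ρ := by
    rw [hy, ← Real.rpow_natCast ((1+ρ) ^ ((1:ℝ)/3)) 3, ← Real.rpow_mul hpos.le]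
    norm_num
  have hy5 : (1+ρ) ^ ((5:ℝ)/3) = y^5 := by
    rw [hy, ← Real.rpow_natCast ((1+ρ) ^ ((1:ℝ)/3)) 5, ← Real.rpow_mul hpos.le]
    norm_num
  have hyl : (9:ℝ)/10 ≤ y := by nlinarith [sq_nonneg (y - 9/10), sq_nonneg (y + 9/10)]
  have hyu : y ≤ 11/10 := by nlinarith [sq_nonneg (y - 11/10), sq_nonneg (y + 11/10)]
  have h4 : (0:ℝ) ≤ -3*y^4 + 3*y^2 + 2*y + 1 := by nlinarith [sq_nonneg y, sq_nonneg (y-1)]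
  have h5 : (0:ℝ) ≤ 3*y^4 + 3*y^3 + 3*y^2 + 2*y + 1 := by positivity
  constructor <;> rw [hy5]
  · nlinarith [mul_nonneg (sq_nonneg (y-1)) h4]
  · nlinarith [mul_nonneg (sq_nonneg (y-1)) h5]

set_option maxHeartbeats 1000000 in
/-- Positive definiteness of the energy `E⁰(ρ,u,s)` of Matsumura–Nishida type:
there exist `0 < ρ₂ ≤ 1/2` and `0 < C₁ ≤ C₂ < ∞` such that for `|ρ| ≤ ρ₂`, `|s| ≤ 1/2`,
`ρ² + |u|² + s² ≤ C₁ E⁰(ρ,u,s) ≤ C₂ (ρ² + |u|² + s²)`. -/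
theorem energy_positive_definite (R : ℝ) (hR : 0 < R) :
    ∃ ρ₂ C₁ C₂ : ℝ, 0 < ρ₂ ∧ ρ₂ ≤ 1/2 ∧ 0 < C₁ ∧ C₁ ≤ C₂ ∧
      ∀ (ρ s : ℝ) (u : EuclideanSpace ℝ (Fin 3)), |ρ| ≤ ρ₂ → |s| ≤ 1/2 →
        ρ^2 + ‖u‖^2 + s^2 ≤
            C₁ * ((3*R*(1+s)/2) * ((1+ρ) ^ ((5:ℝ)/3) - 1 - (5/3)*ρ)
              + ((1+ρ)/2) * ‖u‖^2 + R*s*ρ + (3*R*(1+ρ)/4) * s^2) ∧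
        C₁ * ((3*R*(1+s)/2) * ((1+ρ) ^ ((5:ℝ)/3) - 1 - (5/3)*ρ)
              + ((1+ρ)/2) * ‖u‖^2 + R*s*ρ + (3*R*(1+ρ)/4) * s^2) ≤
            C₂ * (ρ^2 + ‖u‖^2 + s^2) := by
  have hC₁ : (0:ℝ) < 20/R + 20/9 := by positivity
  refine ⟨1/10, 20/R + 20/9, (20/R + 20/9) * (3*R+1), by norm_num, by norm_num, hC₁, ?_, ?_⟩
  · nlinarith [mul_pos hC₁ hR]
  intro ρ s u hρ hs
  obtain ⟨hF1, hF2⟩ := f_bounds ρ hρ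
  obtain ⟨hρ1, hρ2⟩ := abs_le.mp hρ
  obtain ⟨hs1, hs2⟩ := abs_le.mp hs
  set F := (1+ρ) ^ ((5:ℝ)/3) - 1 - (5/3)*ρ with hF
  set U := ‖u‖^2 with hUdef
  have hU : 0 ≤ U := by positivity
  have hF0 : 0 ≤ F := le_trans (by positivity) hF1
  have hA : (0:ℝ) ≤ 3*R*(1+s)/2 := by nlinarith
  -- q ≥ 0 : the core quadratic form estimate
  have hq : (0:ℝ) ≤ (3*(1+s)/4)*ρ^2 + s*ρ + (3*(1+ρ)/4)*s^2 - (1/20)*(ρ^2+s^2) := by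
    nlinarith [sq_nonneg (ρ+s), sq_nonneg (ρ-s), sq_nonneg (ρ+s/2), sq_nonneg (s+ρ/2),
      mul_nonneg (by linarith : (0:ℝ) ≤ 1/2+s) (sq_nonneg ρ),
      mul_nonneg (by linarith : (0:ℝ) ≤ 1/10+ρ) (sq_nonneg s),
      mul_nonneg (by linarith : (0:ℝ) ≤ 1/2-s) (sq_nonneg ρ),
      mul_nonneg (by linarith : (0:ℝ) ≤ 1/10-ρ) (sq_nonneg s),
      mul_nonneg (mul_nonneg (by linarith : (0:ℝ) ≤ 1/2+s) (by linarith : (0:ℝ) ≤ 1/10-ρ)) (by linarith : (0:ℝ) ≤ 1/10+ρ),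
      mul_nonneg (mul_nonneg (by linarith : (0:ℝ) ≤ 1/2-s) (by linarith : (0:ℝ) ≤ 1/10-ρ)) (by linarith : (0:ℝ) ≤ 1/10+ρ)]
  have key1 : (3*R*(1+s)/2) * (ρ^2/2) ≤ (3*R*(1+s)/2) * F :=
    mul_le_mul_of_nonneg_left hF1 hA
  have hUlow : (9/20)*U ≤ ((1+ρ)/2)*U :=
    mul_le_mul_of_nonneg_right (by linarith) hU
  have hE : R/20*(ρ^2+s^2) + 9/20*U ≤
      (3*R*(1+s)/2) * F + ((1+ρ)/2)*U + R*s*ρ + (3*R*(1+ρ)/4)*s^2 := by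
    nlinarith [key1, mul_nonneg hR.le hq, hUlow, hU]
  constructor
  · calc ρ^2 + U + s^2 ≤ (1+R/9)*(ρ^2+s^2) + (9/R+1)*U := by
          have : 0 ≤ (9/R)*U := by positivity
          nlinarith [mul_nonneg (by positivity : (0:ℝ) ≤ R/9) (by positivity : (0:ℝ) ≤ ρ^2+s^2)]
      _ = (20/R + 20/9) * (R/20*(ρ^2+s^2) + 9/20*U) := by field_simp
      _ ≤ (20/R + 20/9) * ((3*R*(1+s)/2) * F + ((1+ρ)/2)*U + R*s*ρ + (3*R*(1+ρ)/4)*s^2) :=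
          mul_le_mul_of_nonneg_left hE hC₁.le
  · have key2 : (3*R*(1+s)/2) * F ≤ (9*R/4) * ρ^2 :=
      le_trans (mul_le_mul_of_nonneg_left hF2 hA)
        (mul_le_mul_of_nonneg_right (by nlinarith) (sq_nonneg ρ))
    have hE2 : (3*R*(1+s)/2) * F + ((1+ρ)/2)*U + R*s*ρ + (3*R*(1+ρ)/4)*s^2 ≤
        (3*R+1) * (ρ^2 + U + s^2) := by
      nlinarith [key2, mul_nonneg hR.le (sq_nonneg (ρ-s)), mul_nonneg hR.le hU,
        mul_nonneg hR.le (sq_nonneg s), mul_nonneg hR.le (sq_nonneg ρ),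
        mul_le_mul_of_nonneg_right (by linarith : (1+ρ)/2 ≤ (1:ℝ)) hU,
        mul_nonneg (mul_nonneg hR.le (by linarith : (0:ℝ) ≤ 1 - 3*(1+ρ)/4)) (sq_nonneg s)]
    calc (20/R + 20/9) * ((3*R*(1+s)/2) * F + ((1+ρ)/2)*U + R*s*ρ + (3*R*(1+ρ)/4)*s^2)
        ≤ (20/R + 20/9) * ((3*R+1) * (ρ^2 + U + s^2)) := mul_le_mul_of_nonneg_left hE2 hC₁.le
      _ = (20/R + 20/9) * (3*R+1) * (ρ^2 + U + s^2) := by ring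
end
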